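/- Assume f = h + g with h ∈ S_{μ,L}^{1,1}(X) (0 ≤ μ ≤ L < ∞) and g convex on X. Let (λ_k, x_k, y_k, v_k) be generated by the corrected semi-implicit scheme with x₀, v₀ ∈ X: y_k = (x_k + α_k v_k)/(1+α_k); v_{k+1} = argmin_{v ∈ X} { g(v) + ⟨Aᵀλ_{k+1} + ∇h_β(y_k), v⟩ + (τ_k/(2α_k))‖v − w_k‖² } where τ_k = γ_k + μ_β α_k and w_k = (γ_k v_k + μ_β α_k y_k)/τ_k; x_{k+1} = (x_k + α_k v_{k+1})/(1+α_k); λ_{k+1} = λ_k + (α_k/θ_k)(A v_{k+1} − b); θ_{k+1} = θ_k/(1+α_k), γ_{k+1} = (γ_k + μ_β α_k)/(1+α_k), θ₀ = 1, γ₀ > 0, and L_β α_k² = γ_k. With E_k = L_β(x_k, λ*) − L_β(x*, λ_k) + (γ_k/2)‖v_k − x*‖² + (θ_k/2)‖λ_k − λ*‖² and R₀ = √(2E₀) + ‖λ₀ − λ*‖ + ‖Ax₀ − b‖, for all k: ‖Ax_k − b‖ ≤ θ_k R₀; 0 ≤ L(x_k, λ*) − L(x*, λ_k) ≤ θ_k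 E₀; and |f(x_k) − f(x*)| ≤ θ_k(E₀ + R₀‖λ*‖), where L(x,λ) = f(x) + δ_X(x) + ⟨λ, Ax − b⟩. -/

import Mathlib

open scoped RealInnerProductSpace Pointwise

/-- The smallest singular value of a linear map between Euclidean spaces. -/
noncomputable def sigmaMin {n m : ℕ}
    (A : EuclideanSpace ℝ (Fin n) →L[ℝ] EuclideanSpace ℝ (Fin m)) : ℝ :=
  sInf {c : ℝ | ∃ x : EuclideanSpace ℝ (Fin n), ‖x‖ = 1 ∧ ‖A x‖ = c}

/-- The convex subdifferential. -/
def subdiff {n : ℕ} (f : EuclideanSpace ℝ (Fin n) → ℝ)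
    (x : EuclideanSpace ℝ (Fin n)) : Set (EuclideanSpace ℝ (Fin n)) :=
  {p | ∀ y, f x + ⟪p, y - x⟫ ≤ f y}

/-- The normal cone of `X` at `x` (empty if `x ∉ X`). -/
def normalCone {n : ℕ} (X : Set (EuclideanSpace ℝ (Fin n)))
    (x : EuclideanSpace ℝ (Fin n)) : Set (EuclideanSpace ℝ (Fin n)) :=
  {p | x ∈ X ∧ ∀ z ∈ X, ⟪p, z - x⟫ ≤ 0}

/-!
Everything rests on the Lyapunov function
`E = L_β(x, λ*) - L_β(x*, λ) + γ/2 ‖v - x*‖² + θ/2 ‖λ - λ*‖²`, which contracts by the factor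
`1 + α_k` at every step. Adding up the descent lemma for `h_β` (its remainder is absorbed by the
step size `L_β α_k² = γ_k`), the `μ_β`-strong convexity of `h_β` at `x*`, convexity of `g`, the
three-point inequality of the proximal step defining `v_{k+1}`, and the polarization identity for
the multiplier update gives `(1 + α_k) E_{k+1} ≤ E_k`, hence `E_k ≤ θ_k E_0`. Since
`θ_k⁻¹ (A x_k - b) - λ_k` is invariant and `‖λ_k - λ*‖² ≤ 2 E_0`, the residual is at most
`θ_k R₀`; the KKT conditions give the saddle-point inequality `f(x*) ≤ L(x, λ*)` on `X`, which
bounds the Lagrangian gap from below and, with the residual bound, the objective error.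
-/

open Filter Set Topology

section InnerProductSpace

variable {E : Type*} [NormedAddCommGroup E] [InnerProductSpace ℝ E]

theorem norm_sub_sq_line_map (t : ℝ) (v u w : E) :
    ‖(1 - t) • v + t • u - w‖ ^ 2 =
      (1 - t) * ‖v - w‖ ^ 2 + t * ‖u - w‖ ^ 2 - t * (1 - t) * ‖u - v‖ ^ 2 := by
  have e : (1 - t) • v + t • u - w = (1 - t) • (v - w) + t • (u - w) := by module
  have e' : u - v = (u - w) - (v - w) := by abel
  rw [e, e', norm_add_sq_real, norm_sub_sq_real (u - w), norm_smul, norm_smul, inner_smul_left,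
    inner_smul_right, mul_pow, mul_pow, Real.norm_eq_abs, Real.norm_eq_abs, sq_abs, sq_abs,
    real_inner_comm (u - w)]
  simp only [conj_trivial]
  ring

theorem mul_norm_sub_sq_sub_norm_sub_sq {a c : ℝ} {w v y : E}
    (hw : (a + c) • w = a • v + c • y) (p q : E) :
    (a + c) * (‖p - w‖ ^ 2 - ‖q - w‖ ^ 2) =
      a * (‖p - v‖ ^ 2 - ‖q - v‖ ^ 2) + c * (‖p - y‖ ^ 2 - ‖q - y‖ ^ 2) := by
  have hp := congrArg (fun z => ⟪p, z⟫) hw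
  have hq := congrArg (fun z => ⟪q, z⟫) hw
  simp only [inner_add_right, inner_smul_right] at hp hq
  simp only [norm_sub_sq_real]
  linear_combination (-2) * hp + 2 * hq

theorem eq_smul_add_smul_of_one_add_smul {α : ℝ} (hα : 0 ≤ α) {z a c : E}
    (hz : (1 + α) • z = a + α • c) : z = (1 / (1 + α)) • a + (α / (1 + α)) • c := by
  have h1 : (1 + α) ≠ 0 := by positivity
  have hz' : z = (1 + α)⁻¹ • ((1 + α) • z) := by rw [smul_smul, inv_mul_cancel₀ h1, one_smul]
  rw [hz', hz]
  module

theorem Convex.mem_of_one_add_smul_eq {X : Set E} (hX : Convex ℝ X) {α : ℝ} (hα : 0 ≤ α)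
    {z a c : E} (hz : (1 + α) • z = a + α • c) (ha : a ∈ X) (hc : c ∈ X) : z ∈ X := by
  rw [eq_smul_add_smul_of_one_add_smul hα hz]
  exact hX ha hc (by positivity) (by positivity) (by field_simp)

theorem ConvexOn.one_add_mul_le_of_smul_eq {X : Set E} {g : E → ℝ} (hg : ConvexOn ℝ X g)
    {α : ℝ} (hα : 0 ≤ α) {z a c : E} (hz : (1 + α) • z = a + α • c) (ha : a ∈ X) (hc : c ∈ X) :
    (1 + α) * g z ≤ g a + α * g c := by
  have hle := hg.2 ha hc (by positivity : 0 ≤ 1 / (1 + α)) (by positivity : 0 ≤ α / (1 + α))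
    (by field_simp)
  rw [← eq_smul_add_smul_of_one_add_smul hα hz, smul_eq_mul, smul_eq_mul] at hle
  calc (1 + α) * g z ≤ (1 + α) * (1 / (1 + α) * g a + α / (1 + α) * g c) := by gcongr
    _ = g a + α * g c := by field_simp

theorem ConvexOn.le_of_isMinOn_add_mul_norm_sub_sq {X : Set E} {φ : E → ℝ}
    (hφ : ConvexOn ℝ X φ) {κ : ℝ} {w v u : E}
    (hmin : IsMinOn (fun z => φ z + κ * ‖z - w‖ ^ 2) X v) (hv : v ∈ X) (hu : u ∈ X) :
    φ v + κ * ‖v - w‖ ^ 2 + κ * ‖u - v‖ ^ 2 ≤ φ u + κ * ‖u - w‖ ^ 2 := by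
  have hnear : ∀ t ∈ Ioo (0 : ℝ) 1,
      φ v + κ * ‖v - w‖ ^ 2 + κ * (1 - t) * ‖u - v‖ ^ 2 ≤ φ u + κ * ‖u - w‖ ^ 2 := by
    rintro t ⟨ht0, ht1⟩
    have h1t : (0 : ℝ) ≤ 1 - t := by linarith
    have hle := isMinOn_iff.1 hmin _ (hφ.1 hv hu h1t ht0.le (by ring))
    have hconv := hφ.2 hv hu h1t ht0.le (by ring)
    simp only [smul_eq_mul, norm_sub_sq_line_map] at hle hconv
    refine le_of_mul_le_mul_left ?_ ht0
    linear_combination hle + hconv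
  have hlim : Tendsto (fun t : ℝ => φ v + κ * ‖v - w‖ ^ 2 + κ * (1 - t) * ‖u - v‖ ^ 2)
      (𝓝[>] 0) (𝓝 (φ v + κ * ‖v - w‖ ^ 2 + κ * ‖u - v‖ ^ 2)) := by
    refine tendsto_nhdsWithin_of_tendsto_nhds ?_
    convert (by fun_prop : Continuous fun t : ℝ =>
      φ v + κ * ‖v - w‖ ^ 2 + κ * (1 - t) * ‖u - v‖ ^ 2).tendsto 0 using 2
    ring
  exact le_of_tendsto hlim (eventually_of_mem (Ioo_mem_nhdsGT one_pos) hnear)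

theorem Convex.descent_lemma [CompleteSpace E] {X : Set E} (hX : Convex ℝ X) {f : E → ℝ}
    {G : E → E} (hf : ∀ z ∈ X, HasGradientAt f (G z) z) {L : ℝ}
    (hG : ∀ u ∈ X, ∀ w ∈ X, ⟪G u - G w, u - w⟫ ≤ L * ‖u - w‖ ^ 2) {u w : E}
    (hu : u ∈ X) (hw : w ∈ X) :
    f w ≤ f u + ⟪G u, w - u⟫ + L / 2 * ‖w - u‖ ^ 2 := by
  set d := w - u
  have hseg : ∀ t ∈ Icc (0 : ℝ) 1, u + t • d ∈ X := fun t ht => by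
    convert hX.add_smul_sub_mem hu hw ht using 1
  have hderiv : ∀ t ∈ Icc (0 : ℝ) 1, HasDerivAt
      (fun s : ℝ => f (u + s • d) - s * ⟪G u, d⟫ - L / 2 * s ^ 2 * ‖d‖ ^ 2)
      (⟪G (u + t • d), d⟫ - ⟪G u, d⟫ - L * t * ‖d‖ ^ 2) t := by
    intro t ht
    have hline : HasDerivAt (fun s : ℝ => u + s • d) d t := by
      simpa using ((hasDerivAt_id t).smul_const d).const_add u
    have hcomp := (hf _ (hseg t ht)).hasFDerivAt.comp_hasDerivAt t hline
    simp only [InnerProductSpace.toDual_apply_apply] at hcomp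
    refine ((hcomp.sub ((hasDerivAt_id t).mul_const ⟪G u, d⟫)).sub
      (((hasDerivAt_pow 2 t).const_mul (L / 2)).mul_const (‖d‖ ^ 2))).congr_deriv ?_
    push_cast
    ring
  have hanti : AntitoneOn
      (fun s : ℝ => f (u + s • d) - s * ⟪G u, d⟫ - L / 2 * s ^ 2 * ‖d‖ ^ 2) (Icc 0 1) := by
    refine antitoneOn_of_deriv_nonpos (convex_Icc 0 1)
      (fun t ht => (hderiv t ht).continuousAt.continuousWithinAt) ?_ ?_
    · rw [interior_Icc]
      exact fun t ht => (hderiv t (Ioo_subset_Icc_self ht)).differentiableAt.differentiableWithinAt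
    · rw [interior_Icc]
      intro t ht
      rw [(hderiv t (Ioo_subset_Icc_self ht)).deriv]
      have hle := hG _ (hseg t (Ioo_subset_Icc_self ht)) u hu
      rw [add_sub_cancel_left, inner_smul_right, norm_smul, Real.norm_of_nonneg ht.1.le,
        inner_sub_left] at hle
      nlinarith [ht.1]
  have h01 := hanti (left_mem_Icc.2 zero_le_one) (right_mem_Icc.2 zero_le_one) zero_le_one
  simp only [one_smul, zero_smul, add_zero, zero_mul, sub_zero, one_mul, one_pow] at h01
  rw [show u + d = w from add_sub_cancel u w] at h01
  linarith

theorem smooth_step {X : Set E} {h : E → ℝ} {G : E → E} {μ L α γ : ℝ}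
    (hlow : ∀ u ∈ X, ∀ w ∈ X, h u + ⟪G u, w - u⟫ + μ / 2 * ‖w - u‖ ^ 2 ≤ h w)
    (hup : ∀ u ∈ X, ∀ w ∈ X, h w ≤ h u + ⟪G u, w - u⟫ + L / 2 * ‖w - u‖ ^ 2)
    (hμ : 0 ≤ μ) (hα : 0 < α) (hγ : 0 ≤ γ) (hstep : L * α ^ 2 = γ)
    {xs x v y v' x' : E} (hxs : xs ∈ X) (hx : x ∈ X) (hy : y ∈ X) (hx' : x' ∈ X)
    (hy_eq : (1 + α) • y = x + α • v) (hx'_eq : (1 + α) • x' = x + α • v') :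
    (1 + α) * h x' ≤ h x + α * h xs + α * ⟪G y, v' - xs⟫ - μ * α / 2 * ‖xs - y‖ ^ 2 +
      γ / 2 * ‖v' - v‖ ^ 2 := by
  have h1α : 0 < 1 + α := by linarith
  have hdir : (1 + α) • (x' - y) = (x - y) + α • (v' - xs) + α • (xs - y) := by
    rw [smul_sub, hx'_eq]; module
  have hinner : (1 + α) * ⟪G y, x' - y⟫ =
      ⟪G y, x - y⟫ + α * ⟪G y, v' - xs⟫ + α * ⟪G y, xs - y⟫ := by
    rw [← inner_smul_right, hdir, inner_add_right, inner_add_right, inner_smul_right,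
      inner_smul_right]
  have hdist : (1 + α) ^ 2 * ‖x' - y‖ ^ 2 = α ^ 2 * ‖v' - v‖ ^ 2 := by
    have hdiff : (1 + α) • (x' - y) = α • (v' - v) := by rw [smul_sub, hx'_eq, hy_eq]; module
    rw [← mul_pow, ← mul_pow]
    simpa only [norm_smul, Real.norm_of_nonneg h1α.le, Real.norm_of_nonneg hα.le]
      using congrArg (‖·‖ ^ 2) hdiff
  -- the step-size rule `L α² = γ` is exactly what absorbs the descent-lemma remainder
  have hrem : (1 + α) * (L / 2 * ‖x' - y‖ ^ 2) ≤ γ / 2 * ‖v' - v‖ ^ 2 := by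
    have hR : 0 ≤ γ / 2 * ‖v' - v‖ ^ 2 := by positivity
    refine le_of_mul_le_mul_left ?_ h1α
    calc (1 + α) * ((1 + α) * (L / 2 * ‖x' - y‖ ^ 2)) = γ / 2 * ‖v' - v‖ ^ 2 := by
          rw [← hstep]; linear_combination L / 2 * hdist
      _ ≤ (1 + α) * (γ / 2 * ‖v' - v‖ ^ 2) := le_mul_of_one_le_left hR (by linarith)
  have hdesc := mul_le_mul_of_nonneg_left (hup y hy x' hx') h1α.le
  have hsc := mul_le_mul_of_nonneg_left (hlow y hy xs hxs) hα.le
  have hconv := hlow y hy x hx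
  have hμxy : 0 ≤ μ / 2 * ‖x - y‖ ^ 2 := by positivity
  linarith

theorem prox_step {X : Set E} {g : E → ℝ} {κ : ℝ} (hg : ConvexOn ℝ X g) {S w v xs : E}
    (hmin : IsMinOn (fun u => g u + ⟪S, u⟫ + κ * ‖u - w‖ ^ 2) X v) (hv : v ∈ X) (hxs : xs ∈ X) :
    g v + ⟪S, v - xs⟫ + κ * ‖v - w‖ ^ 2 + κ * ‖xs - v‖ ^ 2 ≤ g xs + κ * ‖xs - w‖ ^ 2 := by
  have hconv : ConvexOn ℝ X (fun u => g u + ⟪S, u⟫) :=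
    hg.add ((innerₛₗ ℝ S).convexOn hg.1)
  have := hconv.le_of_isMinOn_add_mul_norm_sub_sq hmin hv hxs
  rw [inner_sub_right]
  linarith

theorem multiplier_step {α θ : ℝ} (hθ : 0 < θ) {ls l l' d : E} (hl' : l' = l + (α / θ) • d) :
    α * ⟪ls - l', d⟫ ≤ θ / 2 * ‖l - ls‖ ^ 2 - θ / 2 * ‖l' - ls‖ ^ 2 := by
  have hd : α • d = θ • (l' - l) := by
    rw [hl', add_sub_cancel_left, smul_smul, mul_div_cancel₀ _ hθ.ne']
  have hpolar : ‖ls - l‖ ^ 2 = ‖ls - l'‖ ^ 2 + 2 * ⟪ls - l', l' - l⟫ + ‖l' - l‖ ^ 2 := by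
    rw [← norm_add_sq_real, sub_add_sub_cancel]
  have hsq : 0 ≤ θ / 2 * ‖l' - l‖ ^ 2 := by positivity
  rw [← inner_smul_right, hd, inner_smul_right, norm_sub_rev l, norm_sub_rev l']
  linear_combination (-θ / 2) * hpolar + hsq

end InnerProductSpace

section Euclidean

variable {n m : ℕ} (A : EuclideanSpace ℝ (Fin n) →L[ℝ] EuclideanSpace ℝ (Fin m))

theorem sigmaMin_nonneg : 0 ≤ sigmaMin A :=
  Real.sInf_nonneg (by rintro _ ⟨x, -, rfl⟩; positivity)

theorem sigmaMin_mul_norm_le (z : EuclideanSpace ℝ (Fin n)) : sigmaMin A * ‖z‖ ≤ ‖A z‖ := by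
  rcases eq_or_ne z 0 with rfl | hz
  · simp
  have hle : sigmaMin A ≤ ‖A (‖z‖⁻¹ • z)‖ :=
    csInf_le ⟨0, by rintro _ ⟨x, -, rfl⟩; positivity⟩ ⟨_, norm_smul_inv_norm hz, rfl⟩
  rwa [map_smul, norm_smul, norm_inv, norm_norm, inv_mul_eq_div,
    le_div_iff₀ (norm_pos_iff.2 hz)] at hle

theorem sigmaMin_sq_mul_norm_sq_le (z : EuclideanSpace ℝ (Fin n)) :
    sigmaMin A ^ 2 * ‖z‖ ^ 2 ≤ ‖A z‖ ^ 2 := by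
  rw [← mul_pow]
  exact pow_le_pow_left₀ (mul_nonneg (sigmaMin_nonneg A) (norm_nonneg z))
    (sigmaMin_mul_norm_le A z) 2

theorem le_add_inner_of_kkt {X : Set (EuclideanSpace ℝ (Fin n))}
    {f : EuclideanSpace ℝ (Fin n) → ℝ} {b : EuclideanSpace ℝ (Fin m)}
    {xs : EuclideanSpace ℝ (Fin n)} {ls : EuclideanSpace ℝ (Fin m)} (hAxs : A xs = b)
    (hkkt : ∃ p ∈ subdiff f xs, ∃ q ∈ normalCone X xs,
      p + q + (ContinuousLinearMap.adjoint A) ls = 0)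
    {z : EuclideanSpace ℝ (Fin n)} (hz : z ∈ X) : f xs ≤ f z + ⟪ls, A z - b⟫ := by
  obtain ⟨p, hp, q, ⟨-, hq⟩, hsum⟩ := hkkt
  rw [add_assoc] at hsum
  have hsub := hp z
  rw [eq_neg_of_add_eq_zero_left hsum, inner_neg_left, inner_add_left,
    ContinuousLinearMap.adjoint_inner_left, map_sub, hAxs] at hsub
  linarith [hq z hz]

end Euclidean

section Scheme

variable {E F : Type*} [NormedAddCommGroup E] [InnerProductSpace ℝ E] [NormedAddCommGroup F]
  [InnerProductSpace ℝ F]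

noncomputable def penalized (h : E → ℝ) (A : E →L[ℝ] F) (b : F) (β : ℝ) (z : E) : ℝ :=
  h z + β / 2 * ‖A z - b‖ ^ 2

def lagrangian (f g : E → ℝ) (A : E →L[ℝ] F) (b : F) (x : E) (l : F) : ℝ :=
  f x + g x + ⟪l, A x - b⟫

noncomputable def lyapunov (f g : E → ℝ) (A : E →L[ℝ] F) (b : F) (xs : E) (ls : F) (γ θ : ℝ)
    (x v : E) (l : F) : ℝ :=
  lagrangian f g A b x ls - lagrangian f g A b xs l + γ / 2 * ‖v - xs‖ ^ 2 + θ / 2 * ‖l - ls‖ ^ 2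

theorem lagrangian_penalized (h g : E → ℝ) (A : E →L[ℝ] F) (b : F) (β : ℝ) (x : E) (l : F) :
    lagrangian (penalized h A b β) g A b x l = lagrangian h g A b x l + β / 2 * ‖A x - b‖ ^ 2 := by
  unfold lagrangian penalized
  ring

theorem lagrangian_of_map_eq {A : E →L[ℝ] F} {b : F} {xs : E} (hAxs : A xs = b) (f g : E → ℝ)
    (l : F) : lagrangian f g A b xs l = f xs + g xs := by
  rw [lagrangian, hAxs, sub_self, inner_zero_right, add_zero]

theorem rates_of_lyapunov_le {h g : E → ℝ} {A : E →L[ℝ] F} {b : F} {xs : E} {ls : F}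
    {β γ θ E₀ R₀ : ℝ} {x v : E} {l l₀ r₀ : F} (hAxs : A xs = b) (hβ : 0 ≤ β) (hγ : 0 ≤ γ)
    (hθ : 0 < θ) (hgap : 0 ≤ lagrangian h g A b x ls - lagrangian h g A b xs l)
    (hE : lyapunov (penalized h A b β) g A b xs ls γ θ x v l ≤ θ * E₀)
    (hres : A x - b = θ • (r₀ + (l - l₀))) (hR₀ : R₀ = √(2 * E₀) + ‖l₀ - ls‖ + ‖r₀‖) :
    ‖A x - b‖ ≤ θ * R₀ ∧
      (0 ≤ lagrangian h g A b x ls - lagrangian h g A b xs l ∧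
        lagrangian h g A b x ls - lagrangian h g A b xs l ≤ θ * E₀) ∧
      |(h x + g x) - (h xs + g xs)| ≤ θ * (E₀ + R₀ * ‖ls‖) := by
  rw [lyapunov, lagrangian_penalized, lagrangian_penalized, hAxs, sub_self, norm_zero] at hE
  have hpen : 0 ≤ β / 2 * ‖A x - b‖ ^ 2 := by positivity
  have hprimal : 0 ≤ γ / 2 * ‖v - xs‖ ^ 2 := by positivity
  have hdual : 0 ≤ θ / 2 * ‖l - ls‖ ^ 2 := by positivity
  have hgap_le : lagrangian h g A b x ls - lagrangian h g A b xs l ≤ θ * E₀ := by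
    linarith
  have hl : ‖l - ls‖ ≤ √(2 * E₀) := by
    refine abs_norm (l - ls) ▸ Real.abs_le_sqrt (le_of_mul_le_mul_left ?_ hθ)
    linarith
  have hfeas : ‖A x - b‖ ≤ θ * R₀ := by
    rw [hres, norm_smul, Real.norm_of_nonneg hθ.le, hR₀]
    gcongr
    have htri := norm_sub_le_norm_sub_add_norm_sub l ls l₀
    rw [norm_sub_rev ls] at htri
    linarith [norm_add_le r₀ (l - l₀)]
  have hinner : |⟪ls, A x - b⟫| ≤ θ * R₀ * ‖ls‖ := by
    rw [mul_comm _ ‖ls‖]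
    exact (abs_real_inner_le_norm _ _).trans (by gcongr)
  refine ⟨hfeas, ⟨hgap, hgap_le⟩, ?_⟩
  rw [lagrangian, lagrangian_of_map_eq hAxs] at hgap hgap_le
  rw [abs_le] at hinner ⊢
  constructor <;> linarith [hinner.1, hinner.2]

variable [CompleteSpace E] [CompleteSpace F]

theorem norm_map_sub_sq (A : E →L[ℝ] F) (b : F) (p q : E) :
    ‖A p - b‖ ^ 2 =
      ‖A q - b‖ ^ 2 + 2 * ⟪(ContinuousLinearMap.adjoint A) (A q - b), p - q⟫ + ‖A (p - q)‖ ^ 2 := by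
  rw [ContinuousLinearMap.adjoint_inner_left, ← norm_add_sq_real, map_sub]
  congr 2
  abel

variable {h : E → ℝ} {G : E → E} {A : E →L[ℝ] F} {b : F} {β : ℝ} {u w : E}

theorem penalized_lower_bound {μ c : ℝ} (hβ : 0 ≤ β) (hc : ∀ z, c * ‖z‖ ^ 2 ≤ ‖A z‖ ^ 2)
    (hle : h u + ⟪G u, w - u⟫ + μ / 2 * ‖w - u‖ ^ 2 ≤ h w) :
    penalized h A b β u + ⟪G u + β • (ContinuousLinearMap.adjoint A) (A u - b), w - u⟫ +
      (μ + β * c) / 2 * ‖w - u‖ ^ 2 ≤ penalized h A b β w := by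
  have hA := mul_le_mul_of_nonneg_left (hc (w - u)) hβ
  unfold penalized
  rw [norm_map_sub_sq A b w u, inner_add_left, real_inner_smul_left]
  linarith

theorem penalized_upper_bound {L : ℝ} (hβ : 0 ≤ β)
    (hle : h w ≤ h u + ⟪G u, w - u⟫ + L / 2 * ‖w - u‖ ^ 2) :
    penalized h A b β w ≤ penalized h A b β u +
      ⟪G u + β • (ContinuousLinearMap.adjoint A) (A u - b), w - u⟫ +
      (L + β * ‖A‖ ^ 2) / 2 * ‖w - u‖ ^ 2 := by
  have hA : ‖A (w - u)‖ ^ 2 ≤ ‖A‖ ^ 2 * ‖w - u‖ ^ 2 := by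
    rw [← mul_pow]
    exact pow_le_pow_left₀ (norm_nonneg _) (A.le_opNorm _) 2
  have hA' := mul_le_mul_of_nonneg_left hA hβ
  unfold penalized
  rw [norm_map_sub_sq A b w u, inner_add_left, real_inner_smul_left]
  linarith

variable {g : E → ℝ} {X : Set E} {xs : E} {ls : F}

theorem lyapunov_step {μ L α θ γ : ℝ}
    (hlow : ∀ u ∈ X, ∀ w ∈ X, h u + ⟪G u, w - u⟫ + μ / 2 * ‖w - u‖ ^ 2 ≤ h w)
    (hup : ∀ u ∈ X, ∀ w ∈ X, h w ≤ h u + ⟪G u, w - u⟫ + L / 2 * ‖w - u‖ ^ 2)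
    (hg : ConvexOn ℝ X g) (hμ : 0 ≤ μ) (hα : 0 < α) (hθ : 0 < θ) (hγ : 0 ≤ γ)
    (hstep : L * α ^ 2 = γ) (hxs : xs ∈ X) (hAxs : A xs = b)
    {x v y w v' x' : E} {l l' : F} (hx : x ∈ X) (hv : v ∈ X) (hv' : v' ∈ X)
    (hy : (1 + α) • y = x + α • v) (hw : (γ + μ * α) • w = γ • v + (μ * α) • y)
    (hmin : IsMinOn (fun u => g u + ⟪(ContinuousLinearMap.adjoint A) l' + G y, u⟫ +
      (γ + μ * α) / (2 * α) * ‖u - w‖ ^ 2) X v')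
    (hx' : (1 + α) • x' = x + α • v') (hl' : l' = l + (α / θ) • (A v' - b)) :
    (1 + α) * lyapunov h g A b xs ls ((γ + μ * α) / (1 + α)) (θ / (1 + α)) x' v' l' ≤
      lyapunov h g A b xs ls γ θ x v l := by
  have h1α : 0 < 1 + α := by linarith
  have hyX := hg.1.mem_of_one_add_smul_eq hα.le hy hx hv
  have hx'X := hg.1.mem_of_one_add_smul_eq hα.le hx' hx hv'
  have hsmooth := smooth_step hlow hup hμ hα hγ hstep hxs hx hyX hx'X hy hx'
  have hgconv := hg.one_add_mul_le_of_smul_eq hα.le hx' hx hv'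
  have hmult := multiplier_step (ls := ls) hθ hl'
  have hthree := mul_norm_sub_sq_sub_norm_sub_sq hw xs v'
  have hprox : α * g v' + α * ⟪G y, v' - xs⟫ + α * ⟪l', A v' - b⟫ +
      (γ + μ * α) / 2 * ‖v' - w‖ ^ 2 + (γ + μ * α) / 2 * ‖v' - xs‖ ^ 2 ≤
      α * g xs + (γ + μ * α) / 2 * ‖xs - w‖ ^ 2 := by
    have := mul_le_mul_of_nonneg_left (prox_step hg hmin hv' hxs) hα.le
    rw [inner_add_left, ContinuousLinearMap.adjoint_inner_left, map_sub, hAxs,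
      norm_sub_rev xs v'] at this
    have hκ : α * ((γ + μ * α) / (2 * α)) = (γ + μ * α) / 2 := by field_simp
    linear_combination this + (‖xs - w‖ ^ 2 - ‖v' - w‖ ^ 2 - ‖v' - xs‖ ^ 2) * hκ
  have hres : (1 + α) * ⟪ls, A x' - b⟫ = ⟪ls, A x - b⟫ + α * ⟪ls, A v' - b⟫ := by
    rw [← inner_smul_right, ← inner_smul_right, ← inner_add_right]
    congr 1
    rw [smul_sub, ← map_smul, hx', map_add, map_smul]
    module
  have hμα : 0 ≤ μ * α / 2 * ‖v' - y‖ ^ 2 := by positivity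
  have hL : (1 + α) * lyapunov h g A b xs ls ((γ + μ * α) / (1 + α)) (θ / (1 + α)) x' v' l' =
      (1 + α) * (h x' + g x' + ⟪ls, A x' - b⟫ - (h xs + g xs)) +
        (γ + μ * α) / 2 * ‖v' - xs‖ ^ 2 + θ / 2 * ‖l' - ls‖ ^ 2 := by
    rw [lyapunov, lagrangian_of_map_eq hAxs, lagrangian]
    field_simp
  have hR : lyapunov h g A b xs ls γ θ x v l = h x + g x + ⟪ls, A x - b⟫ - (h xs + g xs) +
      γ / 2 * ‖v - xs‖ ^ 2 + θ / 2 * ‖l - ls‖ ^ 2 := by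
    rw [lyapunov, lagrangian_of_map_eq hAxs, lagrangian]
  rw [hL, hR]
  rw [norm_sub_rev xs v] at hthree
  rw [inner_sub_left] at hmult
  linarith

end Scheme

theorem le_mul_of_one_add_mul_succ_le {e θ α : ℕ → ℝ} (hα : ∀ k, 0 < 1 + α k) (hθ0 : θ 0 = 1)
    (hθ : ∀ k, θ (k + 1) = θ k / (1 + α k)) (he : ∀ k, (1 + α k) * e (k + 1) ≤ e k) :
    ∀ k, e k ≤ θ k * e 0
  | 0 => by rw [hθ0, one_mul]
  | k + 1 => by
    rw [hθ, div_mul_eq_mul_div, le_div_iff₀ (hα k), mul_comm]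
    exact (he k).trans (le_mul_of_one_add_mul_succ_le hα hθ0 hθ he k)

theorem eq_smul_of_one_add_smul_succ {M : Type*} [AddCommGroup M] [Module ℝ M]
    {r l d : ℕ → M} {θ α : ℕ → ℝ} (hα : ∀ k, 1 + α k ≠ 0) (hθne : ∀ k, θ k ≠ 0)
    (hθ0 : θ 0 = 1) (hθ : ∀ k, θ (k + 1) = θ k / (1 + α k))
    (hr : ∀ k, (1 + α k) • r (k + 1) = r k + α k • d k)
    (hl : ∀ k, l (k + 1) = l k + (α k / θ k) • d k) :
    ∀ k, r k = θ k • (r 0 + (l k - l 0))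
  | 0 => by rw [hθ0, one_smul, sub_self, add_zero]
  | k + 1 => by
    apply smul_right_injective M (hα k)
    beta_reduce
    rw [hr, eq_smul_of_one_add_smul_succ hα hθne hθ0 hθ hr hl k, hl, hθ, smul_smul,
      mul_div_cancel₀ _ (hα k)]
    simp only [smul_add, smul_sub, smul_smul, mul_div_cancel₀ _ (hθne k)]
    abel

theorem corrected_semi_implicit_rates_general {n m : ℕ}
    (X : Set (EuclideanSpace ℝ (Fin n)))
    (hXcv : Convex ℝ X)
    (h g : EuclideanSpace ℝ (Fin n) → ℝ)
    (gradh : EuclideanSpace ℝ (Fin n) → EuclideanSpace ℝ (Fin n))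
    (A : EuclideanSpace ℝ (Fin n) →L[ℝ] EuclideanSpace ℝ (Fin m))
    (b : EuclideanSpace ℝ (Fin m))
    (μ L β μβ Lβc : ℝ)
    (hμ : 0 ≤ μ) (hβ : 0 ≤ β)
    (hμβ : μβ = μ + β * sigmaMin A ^ 2)
    (hLβc : Lβc = L + β * ‖A‖ ^ 2)
    (hgrad : ∀ z, HasGradientAt h (gradh z) z)
    (hhsc : ∀ u ∈ X, ∀ w ∈ X,
      h u + ⟪gradh u, w - u⟫ + μ / 2 * ‖w - u‖ ^ 2 ≤ h w)
    (hhlip : ∀ u ∈ X, ∀ w ∈ X, ⟪gradh u - gradh w, u - w⟫ ≤ L * ‖u - w‖ ^ 2)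
    (hgcv : ConvexOn ℝ Set.univ g)
    (Lβ : EuclideanSpace ℝ (Fin n) → EuclideanSpace ℝ (Fin m) → ℝ)
    (hLβ : ∀ z w, Lβ z w = h z + β / 2 * ‖A z - b‖ ^ 2 + g z + ⟪w, A z - b⟫)
    (xs : EuclideanSpace ℝ (Fin n)) (ls : EuclideanSpace ℝ (Fin m))
    (hxs : xs ∈ X) (hKKT1 : A xs = b)
    (hKKT2 : ∃ p ∈ subdiff (fun z => h z + g z) xs, ∃ q ∈ normalCone X xs,
      p + q + (ContinuousLinearMap.adjoint A) ls = 0)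
    (θ γ α : ℕ → ℝ)
    (hα : ∀ k, 0 < α k) (hθ0 : θ 0 = 1) (hγ0 : 0 < γ 0)
    (hθ : ∀ k, θ (k + 1) = θ k / (1 + α k))
    (hγ : ∀ k, γ (k + 1) = (γ k + μβ * α k) / (1 + α k))
    (hstep : ∀ k, Lβc * α k ^ 2 = γ k)
    (lam : ℕ → EuclideanSpace ℝ (Fin m))
    (x y v ws : ℕ → EuclideanSpace ℝ (Fin n))
    (hx0 : x 0 ∈ X) (hv0 : v 0 ∈ X)
    (hy : ∀ k, (1 + α k) • y k = x k + α k • v k)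
    (hws : ∀ k, (γ k + μβ * α k) • ws k = γ k • v k + (μβ * α k) • y k)
    (hvmin : ∀ k, v (k + 1) ∈ X ∧ ∀ u ∈ X,
      g (v (k + 1)) +
        ⟪(ContinuousLinearMap.adjoint A) (lam (k + 1)) + gradh (y k)
          + β • (ContinuousLinearMap.adjoint A) (A (y k) - b), v (k + 1)⟫ +
        (γ k + μβ * α k) / (2 * α k) * ‖v (k + 1) - ws k‖ ^ 2 ≤
      g u +
        ⟪(ContinuousLinearMap.adjoint A) (lam (k + 1)) + gradh (y k)
          + β • (ContinuousLinearMap.adjoint A) (A (y k) - b), u⟫ +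
        (γ k + μβ * α k) / (2 * α k) * ‖u - ws k‖ ^ 2)
    (hx : ∀ k, (1 + α k) • x (k + 1) = x k + α k • v (k + 1))
    (hlam : ∀ k, lam (k + 1) = lam k + (α k / θ k) • (A (v (k + 1)) - b))
    (Ef : ℕ → ℝ)
    (hEf : ∀ k, Ef k = Lβ (x k) ls - Lβ xs (lam k)
      + γ k / 2 * ‖v k - xs‖ ^ 2 + θ k / 2 * ‖lam k - ls‖ ^ 2)
    (Lag : EuclideanSpace ℝ (Fin n) → EuclideanSpace ℝ (Fin m) → ℝ)
    (hLag : ∀ z w, Lag z w = h z + g z + ⟪w, A z - b⟫)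
    (R₀ : ℝ)
    (hR₀ : R₀ = Real.sqrt (2 * Ef 0) + ‖lam 0 - ls‖ + ‖A (x 0) - b‖) :
    ∀ k, ‖A (x k) - b‖ ≤ θ k * R₀ ∧
      (0 ≤ Lag (x k) ls - Lag xs (lam k) ∧
        Lag (x k) ls - Lag xs (lam k) ≤ θ k * Ef 0) ∧
      |(h (x k) + g (x k)) - (h xs + g xs)| ≤ θ k * (Ef 0 + R₀ * ‖ls‖) := by
  subst hμβ hLβc
  obtain rfl : Lβ = lagrangian (penalized h A b β) g A b := funext₂ hLβ
  obtain rfl : Lag = lagrangian h g A b := funext₂ hLag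
  have h1α : ∀ k, 0 < 1 + α k := fun k => by linarith [hα k]
  have hμβ0 : 0 ≤ μ + β * sigmaMin A ^ 2 := by positivity
  have hθpos : ∀ k, 0 < θ k := Nat.rec (hθ0 ▸ one_pos) fun k ih => hθ k ▸ div_pos ih (h1α k)
  have hγnn : ∀ k, 0 ≤ γ k := Nat.rec hγ0.le fun k ih =>
    hγ k ▸ div_nonneg (add_nonneg ih (mul_nonneg hμβ0 (hα k).le)) (h1α k).le
  have hmem : ∀ k, x k ∈ X ∧ v k ∈ X := Nat.rec ⟨hx0, hv0⟩ fun k ih =>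
    ⟨hXcv.mem_of_one_add_smul_eq (hα k).le (hx k) ih.1 (hvmin k).1, (hvmin k).1⟩
  have hE : ∀ k, Ef k ≤ θ k * Ef 0 := by
    refine le_mul_of_one_add_mul_succ_le h1α hθ0 hθ fun k => ?_
    rw [hEf, hEf, hγ, hθ]
    refine lyapunov_step
      (fun u hu w hw => penalized_lower_bound hβ (sigmaMin_sq_mul_norm_sq_le A) (hhsc u hu w hw))
      (fun u hu w hw => penalized_upper_bound hβ
        (hXcv.descent_lemma (fun z _ => hgrad z) hhlip hu hw))
      (hgcv.subset (subset_univ X) hXcv) hμβ0 (hα k) (hθpos k) (hγnn k) (hstep k) hxs hKKT1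
      (hmem k).1 (hmem k).2 (hvmin k).1 (hy k) (hws k) ?_ (hx k) (hlam k)
    exact isMinOn_iff.2 fun u hu => by simpa only [add_assoc] using (hvmin k).2 u hu
  have hres := eq_smul_of_one_add_smul_succ (r := fun k => A (x k) - b)
    (fun k => (h1α k).ne') (fun k => (hθpos k).ne') hθ0 hθ
    (fun k => by rw [smul_sub, ← map_smul, hx k, map_add, map_smul]; module) hlam
  intro k
  exact rates_of_lyapunov_le hKKT1 hβ (hγnn k) (hθpos k)
    (sub_nonneg.2 ((lagrangian_of_map_eq hKKT1 h g _).trans_le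
      (le_add_inner_of_kkt A hKKT1 hKKT2 (hmem k).1))) (hEf k ▸ hE k) (hres k) hR₀

/-- Theorem 5.2 (rate part): nonergodic convergence rates for the corrected semi-implicit
forward-backward scheme (5.6) with step size `L_β α_k² = γ_k`. -/
theorem corrected_semi_implicit_rates {n m : ℕ}
    (X : Set (EuclideanSpace ℝ (Fin n)))
    (hXne : X.Nonempty) (hXcl : IsClosed X) (hXcv : Convex ℝ X)
    (h g : EuclideanSpace ℝ (Fin n) → ℝ)
    (gradh : EuclideanSpace ℝ (Fin n) → EuclideanSpace ℝ (Fin n))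
    (A : EuclideanSpace ℝ (Fin n) →L[ℝ] EuclideanSpace ℝ (Fin m))
    (b : EuclideanSpace ℝ (Fin m))
    (μ L β μβ Lβc : ℝ)
    (hμ : 0 ≤ μ) (hμL : μ ≤ L) (hβ : 0 ≤ β)
    (hμβ : μβ = μ + β * sigmaMin A ^ 2)
    (hLβc : Lβc = L + β * ‖A‖ ^ 2)
    (hgrad : ∀ z, HasGradientAt h (gradh z) z)
    (hhsc : ∀ u ∈ X, ∀ w ∈ X,
      h u + ⟪gradh u, w - u⟫ + μ / 2 * ‖w - u‖ ^ 2 ≤ h w)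
    (hhlip : ∀ u ∈ X, ∀ w ∈ X, ⟪gradh u - gradh w, u - w⟫ ≤ L * ‖u - w‖ ^ 2)
    (hgcv : ConvexOn ℝ Set.univ g)
    (Lβ : EuclideanSpace ℝ (Fin n) → EuclideanSpace ℝ (Fin m) → ℝ)
    (hLβ : ∀ z w, Lβ z w = h z + β / 2 * ‖A z - b‖ ^ 2 + g z + ⟪w, A z - b⟫)
    (xs : EuclideanSpace ℝ (Fin n)) (ls : EuclideanSpace ℝ (Fin m))
    (hxs : xs ∈ X) (hKKT1 : A xs = b)
    (hKKT2 : ∃ p ∈ subdiff (fun z => h z + g z) xs, ∃ q ∈ normalCone X xs,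
      p + q + (ContinuousLinearMap.adjoint A) ls = 0)
    (θ γ α : ℕ → ℝ)
    (hα : ∀ k, 0 < α k) (hθ0 : θ 0 = 1) (hγ0 : 0 < γ 0)
    (hθ : ∀ k, θ (k + 1) = θ k / (1 + α k))
    (hγ : ∀ k, γ (k + 1) = (γ k + μβ * α k) / (1 + α k))
    (hstep : ∀ k, Lβc * α k ^ 2 = γ k)
    (lam : ℕ → EuclideanSpace ℝ (Fin m))
    (x y v ws : ℕ → EuclideanSpace ℝ (Fin n))
    (hx0 : x 0 ∈ X) (hv0 : v 0 ∈ X)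
    (hy : ∀ k, (1 + α k) • y k = x k + α k • v k)
    (hws : ∀ k, (γ k + μβ * α k) • ws k = γ k • v k + (μβ * α k) • y k)
    (hvmin : ∀ k, v (k + 1) ∈ X ∧ ∀ u ∈ X,
      g (v (k + 1)) +
        ⟪(ContinuousLinearMap.adjoint A) (lam (k + 1)) + gradh (y k)
          + β • (ContinuousLinearMap.adjoint A) (A (y k) - b), v (k + 1)⟫ +
        (γ k + μβ * α k) / (2 * α k) * ‖v (k + 1) - ws k‖ ^ 2 ≤
      g u +
        ⟪(ContinuousLinearMap.adjoint A) (lam (k + 1)) + gradh (y k)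
          + β • (ContinuousLinearMap.adjoint A) (A (y k) - b), u⟫ +
        (γ k + μβ * α k) / (2 * α k) * ‖u - ws k‖ ^ 2)
    (hx : ∀ k, (1 + α k) • x (k + 1) = x k + α k • v (k + 1))
    (hlam : ∀ k, lam (k + 1) = lam k + (α k / θ k) • (A (v (k + 1)) - b))
    (Ef : ℕ → ℝ)
    (hEf : ∀ k, Ef k = Lβ (x k) ls - Lβ xs (lam k)
      + γ k / 2 * ‖v k - xs‖ ^ 2 + θ k / 2 * ‖lam k - ls‖ ^ 2)
    (Lag : EuclideanSpace ℝ (Fin n) → EuclideanSpace ℝ (Fin m) → ℝ)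
    (hLag : ∀ z w, Lag z w = h z + g z + ⟪w, A z - b⟫)
    (R₀ : ℝ)
    (hR₀ : R₀ = Real.sqrt (2 * Ef 0) + ‖lam 0 - ls‖ + ‖A (x 0) - b‖) :
    ∀ k, ‖A (x k) - b‖ ≤ θ k * R₀ ∧
      (0 ≤ Lag (x k) ls - Lag xs (lam k) ∧
        Lag (x k) ls - Lag xs (lam k) ≤ θ k * Ef 0) ∧
      |(h (x k) + g (x k)) - (h xs + g xs)| ≤ θ k * (Ef 0 + R₀ * ‖ls‖) :=
  corrected_semi_implicit_rates_general X hXcv h g gradh A b μ L β μβ Lβc hμ hβ hμβ hLβc hgrad hhsc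
    hhlip hgcv Lβ hLβ xs ls hxs hKKT1 hKKT2 θ γ α hα hθ0 hγ0 hθ hγ hstep lam x y v ws hx0 hv0 hy hws
    hvmin hx hlam Ef hEf Lag hLag R₀ hR₀
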